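/- The rational Feigin-Odesskii shuffle product on ⊕_k ℂ[Y_1,...,Y_k]^{S_k}, given by (f *^κ g)(Y_1,...,Y_{k+l}) = (1/(k!l!)) Sym_{k+l}( ∏_{1≤i≤k < j≤k+l} ((Y_i − Y_j + κ)/(Y_i − Y_j)) · f(Y_1,...,Y_k) g(Y_{k+1},...,Y_{k+l}) ), is associative. -/
import Mathlib
set_option maxHeartbeats 1000000
set_option synthInstance.maxHeartbeats 400000
set_option linter.unusedVariables false


open MvPolynomial Finset

/-- The field of rational functions in the variables `Y 1, …, Y k` over `ℂ`. -/
abbrev RatField (k : ℕ) : Type := FractionRing (MvPolynomial (Fin k) ℂ)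

/-- The variable `Y i`, viewed in the field of rational functions. -/
noncomputable def Yv {k : ℕ} (i : Fin k) : RatField k :=
  algebraMap (MvPolynomial (Fin k) ℂ) (RatField k) (X i)

/-- The substitution `Y i ↦ Y (e i)` along an injective map of variable sets, as a ring
homomorphism of fields of rational functions. -/
noncomputable def embK {a b : ℕ} (e : Fin a → Fin b) (he : Function.Injective e) :
    RatField a →+* RatField b :=
  IsFractionRing.lift
    (g := (algebraMap (MvPolynomial (Fin b) ℂ) (RatField b)).comp (rename e).toRingHom)
    (by
      exact (IsFractionRing.injective (MvPolynomial (Fin b) ℂ) (RatField b)).comp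
        (rename_injective _ he))

lemma castAdd_inj {k l : ℕ} : Function.Injective (Fin.castAdd l : Fin k → Fin (k + l)) :=
  Fin.castAdd_injective k l

lemma natAdd_inj {k l : ℕ} : Function.Injective (Fin.natAdd k : Fin l → Fin (k + l)) := by
  intro x y h
  have := congrArg Fin.val h
  simp only [Fin.coe_natAdd] at this
  exact Fin.ext (by omega)

/-- The rational Feigin–Odesskii shuffle product
`(f *^κ g)(Y₁,…,Y_{k+l}) = (1/(k! l!)) Sym_{k+l}( ∏_{i ≤ k < j} ((Y_i − Y_j + κ)/(Y_i − Y_j))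
· f(Y₁,…,Y_k) g(Y_{k+1},…,Y_{k+l}) )`. -/
noncomputable def shuffle (κ : ℂ) {k l : ℕ} (f : RatField k) (g : RatField l) :
    RatField (k + l) :=
  ((k.factorial * l.factorial : ℕ) : RatField (k + l))⁻¹ *
    ∑ σ : Equiv.Perm (Fin (k + l)),
      (∏ i : Fin k, ∏ j : Fin l,
        ((Yv (σ (Fin.castAdd l i)) - Yv (σ (Fin.natAdd k j)) +
            algebraMap (MvPolynomial (Fin (k + l)) ℂ) (RatField (k + l)) (C κ)) /
          (Yv (σ (Fin.castAdd l i)) - Yv (σ (Fin.natAdd k j))))) *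
        embK (fun i => σ (Fin.castAdd l i)) (σ.injective.comp castAdd_inj) f *
        embK (fun j => σ (Fin.natAdd k j)) (σ.injective.comp natAdd_inj) g

-- helper lemmas
lemma embK_algebraMap {a b : ℕ} (e : Fin a → Fin b) (he : Function.Injective e)
    (p : MvPolynomial (Fin a) ℂ) :
    embK e he (algebraMap (MvPolynomial (Fin a) ℂ) (RatField a) p) =
      algebraMap (MvPolynomial (Fin b) ℂ) (RatField b) (rename e p) := by
  simp [embK, IsFractionRing.lift_algebraMap]

lemma embK_Yv {a b : ℕ} (e : Fin a → Fin b) (he : Function.Injective e) (i : Fin a) :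
    embK e he (Yv i) = Yv (e i) := by
  simp [Yv, embK_algebraMap]

lemma embK_C {a b : ℕ} (e : Fin a → Fin b) (he : Function.Injective e) (z : ℂ) :
    embK e he (algebraMap (MvPolynomial (Fin a) ℂ) (RatField a) (C z)) =
      algebraMap (MvPolynomial (Fin b) ℂ) (RatField b) (C z) := by
  simp [embK_algebraMap]

lemma embK_embK {a b c : ℕ} (e1 : Fin a → Fin b) (he1 : Function.Injective e1)
    (e2 : Fin b → Fin c) (he2 : Function.Injective e2) (x : RatField a) :
    embK e2 he2 (embK e1 he1 x) = embK (e2 ∘ e1) (he2.comp he1) x := by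
  have : (embK e2 he2).comp (embK e1 he1) = embK (e2 ∘ e1) (he2.comp he1) := by
    apply IsLocalization.ringHom_ext (nonZeroDivisors (MvPolynomial (Fin a) ℂ))
    ext p
    · simp [RingHom.comp_apply, embK_algebraMap]
    · simp [RingHom.comp_apply, embK_algebraMap]
  exact congrFun (congrArg (·.toFun) this) x

instance ratCharZero (n : ℕ) : CharZero (RatField n) :=
  charZero_of_injective_algebraMap
    (IsFractionRing.injective (MvPolynomial (Fin n) ℂ) (RatField n))

noncomputable def fac {N : ℕ} (κ : ℂ) (x y : Fin N) : RatField N :=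
  (Yv x - Yv y + algebraMap (MvPolynomial (Fin N) ℂ) (RatField N) (C κ)) / (Yv x - Yv y)

lemma shuffle_apply (κ : ℂ) {k l : ℕ} (f : RatField k) (g : RatField l) :
    shuffle κ f g =
      ((k.factorial * l.factorial : ℕ) : RatField (k + l))⁻¹ *
        ∑ σ : Equiv.Perm (Fin (k + l)),
          (∏ i : Fin k, ∏ j : Fin l, fac κ (σ (Fin.castAdd l i)) (σ (Fin.natAdd k j))) *
            embK (fun i => σ (Fin.castAdd l i)) (σ.injective.comp castAdd_inj) f *
            embK (fun j => σ (Fin.natAdd k j)) (σ.injective.comp natAdd_inj) g := rfl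

lemma embK_shuffle {k l N : ℕ} (E : Fin (k + l) → Fin N) (hE : Function.Injective E)
    (κ : ℂ) (f : RatField k) (g : RatField l) :
    embK E hE (shuffle κ f g) =
      ((k.factorial * l.factorial : ℕ) : RatField N)⁻¹ *
        ∑ ρ : Equiv.Perm (Fin (k + l)),
          (∏ i : Fin k, ∏ j : Fin l, fac κ (E (ρ (Fin.castAdd l i))) (E (ρ (Fin.natAdd k j)))) *
            embK (fun i => E (ρ (Fin.castAdd l i)))
              (hE.comp (ρ.injective.comp castAdd_inj)) f *
            embK (fun j => E (ρ (Fin.natAdd k j)))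
              (hE.comp (ρ.injective.comp natAdd_inj)) g := by
  simp only [shuffle_apply, map_mul, map_inv₀, map_natCast, map_sum, map_prod, fac,
    map_div₀, map_sub, map_add, embK_Yv, embK_C, embK_embK]
  rfl

noncomputable def bigT (κ : ℂ) {k l m N : ℕ} (A : Fin k → Fin N) (B : Fin l → Fin N)
    (Cm : Fin m → Fin N) (f : MvPolynomial (Fin k) ℂ) (g : MvPolynomial (Fin l) ℂ)
    (h : MvPolynomial (Fin m) ℂ) (τ : Equiv.Perm (Fin N)) : RatField N :=
  (∏ a, ∏ b, fac κ (τ (A a)) (τ (B b))) *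
  (∏ a, ∏ c, fac κ (τ (A a)) (τ (Cm c))) *
  (∏ b, ∏ c, fac κ (τ (B b)) (τ (Cm c))) *
  algebraMap _ _ (rename (fun a => τ (A a)) f) *
  algebraMap _ _ (rename (fun b => τ (B b)) g) *
  algebraMap _ _ (rename (fun c => τ (Cm c)) h)

/-- extend a permutation of `Fin (k+l)` to `Fin (k+l+m)` fixing the last block -/
def hatL {k l m : ℕ} (ρ : Equiv.Perm (Fin (k + l))) : Equiv.Perm (Fin (k + l + m)) :=
  finSumFinEquiv.permCongr (ρ.sumCongr (Equiv.refl (Fin m)))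

lemma hatL_castAdd {k l m : ℕ} (ρ : Equiv.Perm (Fin (k + l))) (i : Fin (k + l)) :
    hatL (m := m) ρ (Fin.castAdd m i) = Fin.castAdd m (ρ i) := by
  simp [hatL, Equiv.permCongr_apply]

lemma hatL_natAdd {k l m : ℕ} (ρ : Equiv.Perm (Fin (k + l))) (j : Fin m) :
    hatL (m := m) ρ (Fin.natAdd (k + l) j) = Fin.natAdd (k + l) j := by
  simp [hatL, Equiv.permCongr_apply]

/-- extend a permutation of `Fin (l+m)` to `Fin (k+(l+m))` fixing the first block -/
def hatR {k l m : ℕ} (ρ : Equiv.Perm (Fin (l + m))) : Equiv.Perm (Fin (k + (l + m))) :=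
  finSumFinEquiv.permCongr ((Equiv.refl (Fin k)).sumCongr ρ)

lemma hatR_castAdd {k l m : ℕ} (ρ : Equiv.Perm (Fin (l + m))) (i : Fin k) :
    hatR (k := k) ρ (Fin.castAdd (l + m) i) = Fin.castAdd (l + m) i := by
  simp [hatR, Equiv.permCongr_apply]

lemma hatR_natAdd {k l m : ℕ} (ρ : Equiv.Perm (Fin (l + m))) (j : Fin (l + m)) :
    hatR (k := k) ρ (Fin.natAdd k j) = Fin.natAdd k (ρ j) := by
  simp [hatR, Equiv.permCongr_apply]

lemma term_eq_L (κ : ℂ) {k l m : ℕ} (f : MvPolynomial (Fin k) ℂ) (g : MvPolynomial (Fin l) ℂ)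
    (h : MvPolynomial (Fin m) ℂ) (σ : Equiv.Perm (Fin (k + l + m)))
    (ρ : Equiv.Perm (Fin (k + l))) :
    (∏ i : Fin (k + l), ∏ j : Fin m,
        fac κ (σ (Fin.castAdd m i)) (σ (Fin.natAdd (k + l) j))) *
      ((∏ a : Fin k, ∏ b : Fin l,
          fac κ (σ (Fin.castAdd m (ρ (Fin.castAdd l a))))
            (σ (Fin.castAdd m (ρ (Fin.natAdd k b))))) *
        algebraMap _ _ (rename (fun a => σ (Fin.castAdd m (ρ (Fin.castAdd l a)))) f) *
        algebraMap _ _ (rename (fun b => σ (Fin.castAdd m (ρ (Fin.natAdd k b)))) g)) *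
      algebraMap _ _ (rename (fun c => σ (Fin.natAdd (k + l) c)) h)
    = bigT κ (Fin.castAdd m ∘ Fin.castAdd l) (Fin.castAdd m ∘ Fin.natAdd k)
        (Fin.natAdd (k + l)) f g h (σ * hatL ρ) := by
  have h1 : (∏ i : Fin (k + l), ∏ j : Fin m,
      fac κ (σ (Fin.castAdd m i)) (σ (Fin.natAdd (k + l) j))) =
      (∏ a : Fin k, ∏ j : Fin m,
        fac κ (σ (Fin.castAdd m (ρ (Fin.castAdd l a)))) (σ (Fin.natAdd (k + l) j))) *
      (∏ b : Fin l, ∏ j : Fin m,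
        fac κ (σ (Fin.castAdd m (ρ (Fin.natAdd k b)))) (σ (Fin.natAdd (k + l) j))) := by
    rw [← Equiv.prod_comp ρ (fun i => ∏ j : Fin m,
      fac κ (σ (Fin.castAdd m i)) (σ (Fin.natAdd (k + l) j))), Fin.prod_univ_add]
  rw [h1]
  simp only [bigT, Equiv.Perm.mul_apply, Function.comp_apply, hatL_castAdd, hatL_natAdd]
  ring

lemma left_expand (κ : ℂ) (k l m : ℕ) (f : MvPolynomial (Fin k) ℂ)
    (g : MvPolynomial (Fin l) ℂ) (h : MvPolynomial (Fin m) ℂ) :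
    shuffle κ
        (shuffle κ (algebraMap (MvPolynomial (Fin k) ℂ) (RatField k) f)
          (algebraMap (MvPolynomial (Fin l) ℂ) (RatField l) g))
        (algebraMap (MvPolynomial (Fin m) ℂ) (RatField m) h) =
      ((k.factorial * l.factorial * m.factorial : ℕ) : RatField (k + l + m))⁻¹ *
        ∑ τ : Equiv.Perm (Fin (k + l + m)),
          bigT κ (Fin.castAdd m ∘ Fin.castAdd l) (Fin.castAdd m ∘ Fin.natAdd k)
            (Fin.natAdd (k + l)) f g h τ := by
  rw [shuffle_apply]
  have step : ∀ σ : Equiv.Perm (Fin (k + l + m)),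
      (∏ i : Fin (k + l), ∏ j : Fin m,
          fac κ (σ (Fin.castAdd m i)) (σ (Fin.natAdd (k + l) j))) *
        embK (fun i => σ (Fin.castAdd m i)) (σ.injective.comp castAdd_inj)
          (shuffle κ (algebraMap (MvPolynomial (Fin k) ℂ) (RatField k) f)
            (algebraMap (MvPolynomial (Fin l) ℂ) (RatField l) g)) *
        embK (fun j => σ (Fin.natAdd (k + l) j)) (σ.injective.comp natAdd_inj)
          (algebraMap (MvPolynomial (Fin m) ℂ) (RatField m) h) =
      ((k.factorial * l.factorial : ℕ) : RatField (k + l + m))⁻¹ *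
        ∑ ρ : Equiv.Perm (Fin (k + l)),
          bigT κ (Fin.castAdd m ∘ Fin.castAdd l) (Fin.castAdd m ∘ Fin.natAdd k)
            (Fin.natAdd (k + l)) f g h (σ * hatL ρ) := by
    intro σ
    rw [embK_shuffle, embK_algebraMap]
    simp only [embK_algebraMap, Finset.mul_sum, Finset.sum_mul]
    refine Finset.sum_congr rfl fun ρ _ => ?_
    rw [← term_eq_L κ f g h σ ρ]
    ring
  rw [Finset.sum_congr rfl fun σ _ => step σ]
  rw [← Finset.mul_sum]
  have swap : ∑ σ : Equiv.Perm (Fin (k + l + m)), ∑ ρ : Equiv.Perm (Fin (k + l)),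
      bigT κ (Fin.castAdd m ∘ Fin.castAdd l) (Fin.castAdd m ∘ Fin.natAdd k)
        (Fin.natAdd (k + l)) f g h (σ * hatL ρ) =
      ((k + l).factorial : RatField (k + l + m)) *
        ∑ τ : Equiv.Perm (Fin (k + l + m)),
          bigT κ (Fin.castAdd m ∘ Fin.castAdd l) (Fin.castAdd m ∘ Fin.natAdd k)
            (Fin.natAdd (k + l)) f g h τ := by
    rw [Finset.sum_comm]
    have : ∀ ρ : Equiv.Perm (Fin (k + l)),
        ∑ σ : Equiv.Perm (Fin (k + l + m)),
          bigT κ (Fin.castAdd m ∘ Fin.castAdd l) (Fin.castAdd m ∘ Fin.natAdd k)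
            (Fin.natAdd (k + l)) f g h (σ * hatL ρ) =
        ∑ τ : Equiv.Perm (Fin (k + l + m)),
          bigT κ (Fin.castAdd m ∘ Fin.castAdd l) (Fin.castAdd m ∘ Fin.natAdd k)
            (Fin.natAdd (k + l)) f g h τ := fun ρ =>
      Equiv.sum_comp (Equiv.mulRight (hatL ρ)) _
    rw [Finset.sum_congr rfl fun ρ _ => this ρ, Finset.sum_const, Finset.card_univ,
      Fintype.card_perm, Fintype.card_fin, nsmul_eq_mul]
  rw [swap]
  have hk : ((k.factorial : ℕ) : RatField (k + l + m)) ≠ 0 :=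
    Nat.cast_ne_zero.mpr k.factorial_ne_zero
  have hl : ((l.factorial : ℕ) : RatField (k + l + m)) ≠ 0 :=
    Nat.cast_ne_zero.mpr l.factorial_ne_zero
  have hm : ((m.factorial : ℕ) : RatField (k + l + m)) ≠ 0 :=
    Nat.cast_ne_zero.mpr m.factorial_ne_zero
  have hkl : (((k + l).factorial : ℕ) : RatField (k + l + m)) ≠ 0 :=
    Nat.cast_ne_zero.mpr (k + l).factorial_ne_zero
  push_cast
  field_simp

lemma term_eq_R (κ : ℂ) {k l m : ℕ} (f : MvPolynomial (Fin k) ℂ) (g : MvPolynomial (Fin l) ℂ)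
    (h : MvPolynomial (Fin m) ℂ) (σ : Equiv.Perm (Fin (k + (l + m))))
    (ρ : Equiv.Perm (Fin (l + m))) :
    (∏ i : Fin k, ∏ j : Fin (l + m),
        fac κ (σ (Fin.castAdd (l + m) i)) (σ (Fin.natAdd k j))) *
      algebraMap _ _ (rename (fun i => σ (Fin.castAdd (l + m) i)) f) *
      ((∏ b : Fin l, ∏ c : Fin m,
          fac κ (σ (Fin.natAdd k (ρ (Fin.castAdd m b))))
            (σ (Fin.natAdd k (ρ (Fin.natAdd l c))))) *
        algebraMap _ _ (rename (fun b => σ (Fin.natAdd k (ρ (Fin.castAdd m b)))) g) *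
        algebraMap _ _ (rename (fun c => σ (Fin.natAdd k (ρ (Fin.natAdd l c)))) h))
    = bigT κ (Fin.castAdd (l + m)) (Fin.natAdd k ∘ Fin.castAdd m)
        (Fin.natAdd k ∘ Fin.natAdd l) f g h (σ * hatR ρ) := by
  have h1 : (∏ i : Fin k, ∏ j : Fin (l + m),
      fac κ (σ (Fin.castAdd (l + m) i)) (σ (Fin.natAdd k j))) =
      (∏ i : Fin k, ∏ b : Fin l,
        fac κ (σ (Fin.castAdd (l + m) i)) (σ (Fin.natAdd k (ρ (Fin.castAdd m b))))) *
      (∏ i : Fin k, ∏ c : Fin m,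
        fac κ (σ (Fin.castAdd (l + m) i)) (σ (Fin.natAdd k (ρ (Fin.natAdd l c))))) := by
    rw [← Finset.prod_mul_distrib]
    refine Finset.prod_congr rfl fun i _ => ?_
    rw [← Equiv.prod_comp ρ (fun j =>
      fac κ (σ (Fin.castAdd (l + m) i)) (σ (Fin.natAdd k j))), Fin.prod_univ_add]
  rw [h1]
  simp only [bigT, Equiv.Perm.mul_apply, Function.comp_apply, hatR_castAdd, hatR_natAdd]
  ring

lemma right_expand (κ : ℂ) (k l m : ℕ) (f : MvPolynomial (Fin k) ℂ)
    (g : MvPolynomial (Fin l) ℂ) (h : MvPolynomial (Fin m) ℂ) :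
    shuffle κ (algebraMap (MvPolynomial (Fin k) ℂ) (RatField k) f)
        (shuffle κ (algebraMap (MvPolynomial (Fin l) ℂ) (RatField l) g)
          (algebraMap (MvPolynomial (Fin m) ℂ) (RatField m) h)) =
      ((k.factorial * l.factorial * m.factorial : ℕ) : RatField (k + (l + m)))⁻¹ *
        ∑ τ : Equiv.Perm (Fin (k + (l + m))),
          bigT κ (Fin.castAdd (l + m)) (Fin.natAdd k ∘ Fin.castAdd m)
            (Fin.natAdd k ∘ Fin.natAdd l) f g h τ := by
  rw [shuffle_apply]
  have step : ∀ σ : Equiv.Perm (Fin (k + (l + m))),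
      (∏ i : Fin k, ∏ j : Fin (l + m),
          fac κ (σ (Fin.castAdd (l + m) i)) (σ (Fin.natAdd k j))) *
        embK (fun i => σ (Fin.castAdd (l + m) i)) (σ.injective.comp castAdd_inj)
          (algebraMap (MvPolynomial (Fin k) ℂ) (RatField k) f) *
        embK (fun j => σ (Fin.natAdd k j)) (σ.injective.comp natAdd_inj)
          (shuffle κ (algebraMap (MvPolynomial (Fin l) ℂ) (RatField l) g)
            (algebraMap (MvPolynomial (Fin m) ℂ) (RatField m) h)) =
      ((l.factorial * m.factorial : ℕ) : RatField (k + (l + m)))⁻¹ *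
        ∑ ρ : Equiv.Perm (Fin (l + m)),
          bigT κ (Fin.castAdd (l + m)) (Fin.natAdd k ∘ Fin.castAdd m)
            (Fin.natAdd k ∘ Fin.natAdd l) f g h (σ * hatR ρ) := by
    intro σ
    rw [embK_shuffle, embK_algebraMap]
    simp only [embK_algebraMap, Finset.mul_sum, Finset.sum_mul]
    refine Finset.sum_congr rfl fun ρ _ => ?_
    rw [← term_eq_R κ f g h σ ρ]
    ring
  rw [Finset.sum_congr rfl fun σ _ => step σ]
  rw [← Finset.mul_sum]
  have swap : ∑ σ : Equiv.Perm (Fin (k + (l + m))), ∑ ρ : Equiv.Perm (Fin (l + m)),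
      bigT κ (Fin.castAdd (l + m)) (Fin.natAdd k ∘ Fin.castAdd m)
        (Fin.natAdd k ∘ Fin.natAdd l) f g h (σ * hatR ρ) =
      ((l + m).factorial : RatField (k + (l + m))) *
        ∑ τ : Equiv.Perm (Fin (k + (l + m))),
          bigT κ (Fin.castAdd (l + m)) (Fin.natAdd k ∘ Fin.castAdd m)
            (Fin.natAdd k ∘ Fin.natAdd l) f g h τ := by
    rw [Finset.sum_comm]
    have : ∀ ρ : Equiv.Perm (Fin (l + m)),
        ∑ σ : Equiv.Perm (Fin (k + (l + m))),
          bigT κ (Fin.castAdd (l + m)) (Fin.natAdd k ∘ Fin.castAdd m)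
            (Fin.natAdd k ∘ Fin.natAdd l) f g h (σ * hatR ρ) =
        ∑ τ : Equiv.Perm (Fin (k + (l + m))),
          bigT κ (Fin.castAdd (l + m)) (Fin.natAdd k ∘ Fin.castAdd m)
            (Fin.natAdd k ∘ Fin.natAdd l) f g h τ := fun ρ =>
      Equiv.sum_comp (Equiv.mulRight (hatR ρ)) _
    rw [Finset.sum_congr rfl fun ρ _ => this ρ, Finset.sum_const, Finset.card_univ,
      Fintype.card_perm, Fintype.card_fin, nsmul_eq_mul]
  rw [swap]
  have hk : ((k.factorial : ℕ) : RatField (k + (l + m))) ≠ 0 :=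
    Nat.cast_ne_zero.mpr k.factorial_ne_zero
  have hl : ((l.factorial : ℕ) : RatField (k + (l + m))) ≠ 0 :=
    Nat.cast_ne_zero.mpr l.factorial_ne_zero
  have hm : ((m.factorial : ℕ) : RatField (k + (l + m))) ≠ 0 :=
    Nat.cast_ne_zero.mpr m.factorial_ne_zero
  have hlm : (((l + m).factorial : ℕ) : RatField (k + (l + m))) ≠ 0 :=
    Nat.cast_ne_zero.mpr (l + m).factorial_ne_zero
  push_cast
  field_simp

lemma embK_fac {a b : ℕ} (e : Fin a → Fin b) (he : Function.Injective e) (κ : ℂ)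
    (x y : Fin a) : embK e he (fac κ x y) = fac κ (e x) (e y) := by
  simp [fac, map_div₀, map_add, map_sub, embK_Yv, embK_C]

lemma embK_bigT {k l m N' N : ℕ} (c : Fin N' ≃ Fin N) (κ : ℂ)
    (A : Fin k → Fin N') (B : Fin l → Fin N') (Cm : Fin m → Fin N')
    (f : MvPolynomial (Fin k) ℂ) (g : MvPolynomial (Fin l) ℂ) (h : MvPolynomial (Fin m) ℂ)
    (τ : Equiv.Perm (Fin N')) :
    embK c c.injective (bigT κ A B Cm f g h τ) =
      bigT κ (⇑c ∘ A) (⇑c ∘ B) (⇑c ∘ Cm) f g h (c.permCongr τ) := by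
  simp only [bigT, map_mul, map_prod, embK_fac, embK_algebraMap, rename_rename,
    Equiv.permCongr_apply, Function.comp_apply, Equiv.symm_apply_apply, Function.comp_def]


/-- The rational Feigin–Odesskii shuffle product on
`⊕_k ℂ[Y₁,…,Y_k]^{S_k}` is associative (as an identity of symmetric rational expressions
in `k + l + m` variables, for `f, g, h` symmetric polynomials in `k, l, m` variables). -/
theorem statement6 (κ : ℂ) (k l m : ℕ)
    (f : MvPolynomial (Fin k) ℂ) (g : MvPolynomial (Fin l) ℂ)
    (h : MvPolynomial (Fin m) ℂ)
    (hf : f.IsSymmetric) (hg : g.IsSymmetric) (hh : h.IsSymmetric) :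
    shuffle κ
        (shuffle κ (algebraMap (MvPolynomial (Fin k) ℂ) (RatField k) f)
          (algebraMap (MvPolynomial (Fin l) ℂ) (RatField l) g))
        (algebraMap (MvPolynomial (Fin m) ℂ) (RatField m) h) =
      embK (finCongr (Nat.add_assoc k l m).symm) (finCongr _).injective
        (shuffle κ (algebraMap (MvPolynomial (Fin k) ℂ) (RatField k) f)
          (shuffle κ (algebraMap (MvPolynomial (Fin l) ℂ) (RatField l) g)
            (algebraMap (MvPolynomial (Fin m) ℂ) (RatField m) h))) := by
  rw [left_expand, right_expand]
  set c : Fin (k + (l + m)) ≃ Fin (k + l + m) := finCongr (Nat.add_assoc k l m).symm with hc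
  rw [map_mul, map_inv₀, map_natCast, map_sum]
  congr 1
  have e1 : ⇑c ∘ (Fin.castAdd (l + m)) = (Fin.castAdd m ∘ Fin.castAdd l : Fin k → _) := by
    funext a; apply Fin.ext; simp [hc]
  have e2 : ⇑c ∘ (Fin.natAdd k ∘ Fin.castAdd m) =
      (Fin.castAdd m ∘ Fin.natAdd k : Fin l → _) := by
    funext b; apply Fin.ext; simp [hc]
  have e3 : ⇑c ∘ (Fin.natAdd k ∘ Fin.natAdd l) = (Fin.natAdd (k + l) : Fin m → _) := by
    funext x; apply Fin.ext; simp [hc]; omega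
  have key : ∀ τ : Equiv.Perm (Fin (k + (l + m))),
      embK c c.injective (bigT κ (Fin.castAdd (l + m)) (Fin.natAdd k ∘ Fin.castAdd m)
        (Fin.natAdd k ∘ Fin.natAdd l) f g h τ) =
      bigT κ (Fin.castAdd m ∘ Fin.castAdd l) (Fin.castAdd m ∘ Fin.natAdd k)
        (Fin.natAdd (k + l)) f g h (c.permCongr τ) := by
    intro τ
    rw [embK_bigT, e1, e2, e3]
  rw [show (∑ τ : Equiv.Perm (Fin (k + (l + m))),
      embK c c.injective (bigT κ (Fin.castAdd (l + m)) (Fin.natAdd k ∘ Fin.castAdd m)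
        (Fin.natAdd k ∘ Fin.natAdd l) f g h τ)) =
      ∑ τ : Equiv.Perm (Fin (k + (l + m))),
        bigT κ (Fin.castAdd m ∘ Fin.castAdd l) (Fin.castAdd m ∘ Fin.natAdd k)
          (Fin.natAdd (k + l)) f g h (c.permCongr τ)
    from Finset.sum_congr rfl fun τ _ => key τ]
  exact (Equiv.sum_comp c.permCongr _).symm
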